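/- arXiv:1604.07216 — 5 statements merged into one kernel-verified Lean document; each statement's English description precedes it below -/
import Mathlib

section
/- Let n ≥ 1 and let t₁, t₂ be n×n real matrices. The set R(t₁ × t₂) of all n×n real matrices r such that every entry of r is a half-integer (i.e., r i j ∈ (1/2)ℤ for all i, j) and the 2n×2n block matrix [[t₁, r],[rᵀ, t₂]] is positive semidefinite, is a finite set. -/
open Matrix
open scoped ComplexOrder

/-!
Positive semidefiniteness of the block matrix bounds every entry of `r` through its
2×2 principal minors: `(r i j)² ≤ t₁ i i * t₂ j j`. Only finitely many half-integers
satisfy such a bound, so `r` ranges over a finite product of finite sets.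
-/

theorem Matrix.PosSemidef.apply_mul_star_apply_le {ι 𝕜 : Type*} [Fintype ι] [RCLike 𝕜]
    {M : Matrix ι ι 𝕜} (hM : M.PosSemidef) (i j : ι) :
    M i j * star (M i j) ≤ M i i * M j j := by
  classical
  have hdet := (hM.submatrix ![i, j]).det_nonneg
  simp only [det_fin_two, submatrix_apply, Matrix.cons_val_zero, Matrix.cons_val_one,
    ← hM.isHermitian.apply j i] at hdet
  exact sub_nonneg.mp hdet

theorem Matrix.PosSemidef.fromBlocks₁₂_apply_sq_le {m n : Type*} [Fintype m] [Fintype n]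
    {A : Matrix m m ℝ} {B : Matrix m n ℝ} {D : Matrix n n ℝ}
    (h : (fromBlocks A B Bᵀ D).PosSemidef) (i : m) (j : n) :
    B i j ^ 2 ≤ A i i * D j j := by
  simpa [sq] using h.apply_mul_star_apply_le (Sum.inl i) (Sum.inr j)

theorem finite_setOf_half_int_sq_le (c : ℝ) :
    {x : ℝ | (∃ m : ℤ, x = m / 2) ∧ x ^ 2 ≤ c}.Finite := by
  refine ((Set.finite_Icc (-⌊4 * c⌋) ⌊4 * c⌋).image fun m : ℤ => (m : ℝ) / 2).subset ?_
  rintro _ ⟨⟨m, rfl⟩, hm⟩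
  refine ⟨m, ?_, rfl⟩
  have habs_le_sq : ((|m| : ℤ) : ℝ) ≤ (m : ℝ) ^ 2 := by
    exact_mod_cast (sq_abs m ▸ Int.le_self_sq |m|)
  rw [Set.mem_Icc, ← abs_le]
  exact Int.le_floor.mpr (by linarith)

theorem stmt1_general (n : ℕ) (t₁ t₂ : Matrix (Fin n) (Fin n) ℝ) :
    {r : Matrix (Fin n) (Fin n) ℝ |
      (∀ i j, ∃ m : ℤ, r i j = (m : ℝ) / 2) ∧
      (Matrix.fromBlocks t₁ r rᵀ t₂).PosSemidef}.Finite := by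
  refine (Set.Finite.pi fun i => Set.Finite.pi fun j =>
    finite_setOf_half_int_sq_le (t₁ i i * t₂ j j)).subset ?_
  rintro r ⟨hhalf, hpsd⟩ i - j -
  exact ⟨hhalf i j, hpsd.fromBlocks₁₂_apply_sq_le i j⟩

/-- The set of half-integral matrices `r` making the block matrix
[[t₁, r],[rᵀ, t₂]] positive semidefinite is finite. -/
theorem stmt1 (n : ℕ) (hn : 1 ≤ n) (t₁ t₂ : Matrix (Fin n) (Fin n) ℝ) :
    {r : Matrix (Fin n) (Fin n) ℝ |
      (∀ i j, ∃ m : ℤ, r i j = (m : ℝ) / 2) ∧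
      (Matrix.fromBlocks t₁ r rᵀ t₂).PosSemidef}.Finite :=
  stmt1_general n t₁ t₂
end

section
/- Let R be a commutative ring, let m ≥ 2, and let s be an m×m symmetric matrix over R with fixed indices i ≠ j such that s i j = s j i = 0. For x ∈ R let s(x) denote the matrix obtained from s by replacing the (i,j) and (j,i) entries by x. Then det(s(x)) = det(s) + 2·(−1)^{i+j}·x·det(s with row i and column j deleted) − x²·det(s with rows i, j and columns i, j deleted). -/
/-! Replacing the `(i, j)` and `(j, i)` entries of `s` by `x` adds `x • e_j` to row `i` and
`x • e_i` to row `j`. Expanding the determinant multilinearly in these two rows gives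
`det s + x (D_ij + D_ji) + x² E`, where `D_ij` is the `(i, j)` cofactor (and `D_ji = D_ij` by
symmetry) and `E` is the determinant of `s` with rows `i`, `j` replaced by `e_j`, `e_i`.
Swapping columns `i` and `j` turns these rows into `e_i`, `e_j`, and expanding along them
shows that `E` is minus the principal minor obtained by deleting rows and columns `i`, `j`. -/

open Matrix

namespace Matrix

variable {R : Type*} [CommRing R]

section Multilinear

variable {ι : Type*} [Fintype ι] [DecidableEq ι]

theorem det_updateRow_add_smul (A : Matrix ι ι R) (i : ι) (c : R) (v : ι → R) :
    (A.updateRow i (A i + c • v)).det = A.det + c * (A.updateRow i v).det := by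
  rw [det_updateRow_add, det_updateRow_smul, updateRow_eq_self]

theorem det_updateRow_add_smul_updateRow_add_smul (A : Matrix ι ι R) {i j : ι} (hij : i ≠ j)
    (c d : R) (v w : ι → R) :
    ((A.updateRow i (A i + c • v)).updateRow j (A j + d • w)).det =
      A.det + c * (A.updateRow i v).det + d * (A.updateRow j w).det
        + c * d * ((A.updateRow i v).updateRow j w).det := by
  have hAi : A i = (A.updateRow j w) i := (updateRow_ne hij).symm
  have hAj : A j = (A.updateRow i (A i + c • v)) j := (updateRow_ne hij.symm).symm
  rw [hAj, det_updateRow_add_smul, det_updateRow_add_smul, updateRow_comm _ hij,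
    hAi, det_updateRow_add_smul, updateRow_comm _ hij.symm]
  ring

end Multilinear

variable {n : ℕ}

theorem det_updateRow_single (A : Matrix (Fin (n + 1)) (Fin (n + 1)) R) (i j : Fin (n + 1)) :
    (A.updateRow i (Pi.single j 1)).det =
      (-1) ^ ((i : ℕ) + j) * (A.submatrix i.succAbove j.succAbove).det := by
  rw [← adjugate_apply, adjugate_fin_succ_eq_det_submatrix]

theorem det_eq_det_submatrix_succAbove_of_row_eq_single
    (M : Matrix (Fin (n + 1)) (Fin (n + 1)) R) {i : Fin (n + 1)} (hi : M i = Pi.single i 1) :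
    M.det = (M.submatrix i.succAbove i.succAbove).det := by
  have h := det_updateRow_single M i i
  rwa [← hi, updateRow_eq_self, ← two_mul, pow_mul, neg_one_sq, one_pow, one_mul] at h

theorem det_eq_det_submatrix_of_rows_eq_single (M : Matrix (Fin (n + 2)) (Fin (n + 2)) R)
    {i j : Fin (n + 2)} {j₁ : Fin (n + 1)} (hj₁ : i.succAbove j₁ = j)
    (hi : M i = Pi.single i 1) (hj : M j = Pi.single j 1) :
    M.det = (M.submatrix (i.succAbove ∘ j₁.succAbove) (i.succAbove ∘ j₁.succAbove)).det := by
  have hj₁' : (M.submatrix i.succAbove i.succAbove) j₁ = Pi.single j₁ 1 := by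
    ext b
    simp [hj₁ ▸ hj, Pi.single_apply]
  rw [det_eq_det_submatrix_succAbove_of_row_eq_single M hi,
    det_eq_det_submatrix_succAbove_of_row_eq_single _ hj₁', submatrix_submatrix]

theorem det_updateRow_single_updateRow_single (A : Matrix (Fin (n + 2)) (Fin (n + 2)) R)
    {i j : Fin (n + 2)} {j₁ : Fin (n + 1)} (hj₁ : i.succAbove j₁ = j) :
    ((A.updateRow i (Pi.single j 1)).updateRow j (Pi.single i 1)).det =
      -(A.submatrix (i.succAbove ∘ j₁.succAbove) (i.succAbove ∘ j₁.succAbove)).det := by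
  have hij : i ≠ j := hj₁ ▸ (Fin.succAbove_ne i j₁).symm
  set M := (A.updateRow i (Pi.single j 1)).updateRow j (Pi.single i 1)
  set C := M.submatrix id (Equiv.swap i j)
  have hC : C.det = -M.det := by
    simp [C, det_permute', Equiv.Perm.sign_swap hij]
  have hCi : C i = Pi.single i 1 := by
    ext b
    simp [C, M, updateRow_ne hij, Pi.single_apply, Equiv.swap_apply_eq_iff]
  have hCj : C j = Pi.single j 1 := by
    ext b
    simp [C, M, Pi.single_apply, Equiv.swap_apply_eq_iff]
  have hsub : C.submatrix (i.succAbove ∘ j₁.succAbove) (i.succAbove ∘ j₁.succAbove) =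
      A.submatrix (i.succAbove ∘ j₁.succAbove) (i.succAbove ∘ j₁.succAbove) := by
    ext a b
    have hne_i (c) : i.succAbove (j₁.succAbove c) ≠ i := Fin.succAbove_ne _ _
    have hne_j (c) : i.succAbove (j₁.succAbove c) ≠ j :=
      hj₁ ▸ Fin.succAbove_right_injective.ne (Fin.succAbove_ne j₁ c)
    simp [C, M, updateRow_ne, hne_i, hne_j, Equiv.swap_apply_of_ne_of_ne]
  rw [← neg_neg M.det, ← hC, det_eq_det_submatrix_of_rows_eq_single C hj₁ hCi hCj, hsub]

end Matrix

/-- Quadratic expansion of the determinant of a symmetric matrix in the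
off-diagonal entry `x` placed at positions `(i,j)` and `(j,i)`. -/
theorem stmt5 (R : Type*) [CommRing R] (n : ℕ)
    (s : Matrix (Fin (n + 2)) (Fin (n + 2)) R) (hsym : s.IsSymm)
    (i j : Fin (n + 2)) (hij : i ≠ j) (hs0 : s i j = 0) (hs0' : s j i = 0)
    (j₁ : Fin (n + 1)) (hj₁ : i.succAbove j₁ = j) (x : R) :
    (Matrix.of fun a b =>
        if (a = i ∧ b = j) ∨ (a = j ∧ b = i) then x else s a b).det
      = s.det
        + 2 * (-1 : R) ^ ((i : ℕ) + (j : ℕ)) * x *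
            (s.submatrix i.succAbove j.succAbove).det
        - x ^ 2 *
            (s.submatrix (i.succAbove ∘ j₁.succAbove)
              (i.succAbove ∘ j₁.succAbove)).det := by
  have hrows : (Matrix.of fun a b => if (a = i ∧ b = j) ∨ (a = j ∧ b = i) then x else s a b) =
      (s.updateRow i (s i + x • Pi.single j 1)).updateRow j (s j + x • Pi.single i 1) := by
    ext a b
    simp only [of_apply, updateRow_apply, Pi.add_apply, Pi.smul_apply, Pi.single_apply,
      smul_eq_mul, mul_ite, mul_one, mul_zero]
    split_ifs <;> simp_all
  have hminor : s.submatrix j.succAbove i.succAbove = (s.submatrix i.succAbove j.succAbove)ᵀ :=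
    ext fun _ _ => hsym.apply _ _
  rw [hrows, det_updateRow_add_smul_updateRow_add_smul s hij, det_updateRow_single,
    det_updateRow_single, det_updateRow_single_updateRow_single s hj₁, hminor, det_transpose]
  ring
end

section
/- With Q, s_ℓ, and g₀, g₁, g₃ as in the context, s₄ = 2g₀² + 4g₀g₁ + g₀g₃ + g₁². -/
/-! Multiplying a polynomial by `1 - bX` sends its coefficients `cₙ` to `cₙ - b cₙ₋₁`. Unrolling this
recursion over the eight factors of `Q` expresses `s₄` as the fourth elementary symmetric polynomial
of the eight Satake monomials, and the claimed formula is then a polynomial identity in `a₀, …, a₃`. -/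

namespace Polynomial

theorem coeff_mul_one_sub_C_mul_X_succ {R : Type*} [CommRing R] (p : R[X]) (b : R) (n : ℕ) :
    (p * (1 - C b * X)).coeff (n + 1) = p.coeff (n + 1) - b * p.coeff n := by
  rw [mul_sub, mul_one, ← mul_assoc, coeff_sub, coeff_mul_X, coeff_mul_C, mul_comm]

theorem coeff_mul_one_sub_C_mul_X_zero {R : Type*} [CommRing R] (p : R[X]) (b : R) :
    (p * (1 - C b * X)).coeff 0 = p.coeff 0 := by
  rw [mul_sub, mul_one, ← mul_assoc, coeff_sub, coeff_mul_X_zero, sub_zero]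

end Polynomial

open Polynomial in
/-- For the degree-three spinor Euler factor `Q`,
`s₄ = 2g₀² + 4g₀g₁ + g₀g₃ + g₁²`. -/
theorem stmt10 (R : Type*) [CommRing R] (a₀ a₁ a₂ a₃ : R) (Q : R[X])
    (hQ : Q = (1 - C a₀ * X) * (1 - C (a₀ * a₁) * X) * (1 - C (a₀ * a₂) * X) *
        (1 - C (a₀ * a₃) * X) * (1 - C (a₀ * a₁ * a₂) * X) *
        (1 - C (a₀ * a₁ * a₃) * X) * (1 - C (a₀ * a₂ * a₃) * X) *
        (1 - C (a₀ * a₁ * a₂ * a₃) * X))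
    (s : ℕ → R) (hs : ∀ ℓ, s ℓ = (-1 : R) ^ ℓ * Q.coeff ℓ)
    (g₀ g₁ g₃ : R)
    (hg₀ : g₀ = a₀ ^ 2 * a₁ * a₂ * a₃)
    (hg₁ : g₁ = a₀ ^ 2 * (a₁ * a₂ + a₁ * a₃ + a₂ * a₃)
        + a₀ ^ 2 * a₁ * a₂ * a₃ * (a₁ + a₂ + a₃))
    (hg₃ : g₃ = a₀ ^ 2 * (1 + a₁ ^ 2) * (1 + a₂ ^ 2) * (1 + a₃ ^ 2)) :
    s 4 = 2 * g₀ ^ 2 + 4 * g₀ * g₁ + g₀ * g₃ + g₁ ^ 2 := by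
  rw [hs, hQ, ← one_mul (1 - C a₀ * X)]
  simp only [coeff_mul_one_sub_C_mul_X_succ, coeff_mul_one_sub_C_mul_X_zero, coeff_one,
    Nat.add_one_ne_zero, if_false, if_true]
  subst hg₀ hg₁ hg₃
  ring
end

section
/- Let K be a field, let a₀ ∈ K, and let a₁, a₂, a₃ be nonzero elements of K. Define r_ℓ = (−1)^ℓ · (coefficient of X^ℓ) of the polynomial ∏_{i=1}^3 (1 − a_i X)(1 − a_i⁻¹ X) in K[X], for 0 ≤ ℓ ≤ 3, and define g₀, g₁, g₂, g₃ as in the context. Then g₀·r₁ = g₁, g₀·r₂ = 3g₀ + g₂, and g₀·r₃ = 2g₁ + g₃. Equivalently, the row vector g₀·(r₀, r₁, r₂, r₃) equals (g₀, g₁, g₂, g₃)·P₃ where P₃ is the upper triangular matrix with rows (1,0,3,0), (0,1,0,2), (0,0,1,0), (0,0,0,1). -/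
/-!
Pairing each root with its inverse gives `(1 - a X)(1 - a⁻¹ X) = 1 - (a + a⁻¹) X + X²`, so the Euler
factor is a product of three palindromic quadratics and `r₁, r₂, r₃` are polynomials in
`sᵢ = aᵢ + aᵢ⁻¹`. Multiplying by `g₀ = a₀² a₁ a₂ a₃` clears the denominators through
`aᵢ sᵢ = 1 + aᵢ²`, which turns these polynomials into `g₁`, `3 g₀ + g₂` and `2 g₁ + g₃`.
-/

open Polynomial

section CommRing

variable {R : Type*} [CommRing R]

theorem one_sub_C_mul_X_mul_one_sub_C_mul_X_of_mul_eq_one {a b : R} (h : a * b = 1) :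
    (1 - C a * X) * (1 - C b * X) = 1 - C (a + b) * X + X ^ 2 := by
  have hC : C a * C b = 1 := by rw [← C_mul, h, C_1]
  rw [C_add]
  linear_combination X ^ 2 * hC

theorem palindromic_quadratic_prod_three (s₁ s₂ s₃ : R) :
    (1 - C s₁ * X + X ^ 2) * (1 - C s₂ * X + X ^ 2) * (1 - C s₃ * X + X ^ 2) =
      1 - C (s₁ + s₂ + s₃) * X + C (3 + (s₁ * s₂ + s₁ * s₃ + s₂ * s₃)) * X ^ 2
        - C (s₁ * s₂ * s₃ + 2 * (s₁ + s₂ + s₃)) * X ^ 3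
        + C (3 + (s₁ * s₂ + s₁ * s₃ + s₂ * s₃)) * X ^ 4 - C (s₁ + s₂ + s₃) * X ^ 5 + X ^ 6 := by
  simp only [map_add, map_mul, map_ofNat]
  ring

theorem coeff_palindromic_quadratic_prod_three (s₁ s₂ s₃ : R) :
    let p := (1 - C s₁ * X + X ^ 2) * (1 - C s₂ * X + X ^ 2) * (1 - C s₃ * X + X ^ 2)
    p.coeff 1 = -(s₁ + s₂ + s₃) ∧ p.coeff 2 = 3 + (s₁ * s₂ + s₁ * s₃ + s₂ * s₃) ∧
      p.coeff 3 = -(s₁ * s₂ * s₃ + 2 * (s₁ + s₂ + s₃)) := by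
  simp only [palindromic_quadratic_prod_three, coeff_add, coeff_sub, coeff_C_mul, coeff_X_pow,
    coeff_one, coeff_X]
  norm_num

end CommRing

theorem mul_add_inv_self_eq {K : Type*} [Field K] {a : K} (h : a ≠ 0) :
    a * (a + a⁻¹) = 1 + a ^ 2 := by
  rw [mul_add, mul_inv_cancel₀ h]
  ring

theorem euler_factor_three_eq_prod_palindromic {K : Type*} [Field K] {a₁ a₂ a₃ : K}
    (h₁ : a₁ ≠ 0) (h₂ : a₂ ≠ 0) (h₃ : a₃ ≠ 0) :
    (1 - C a₁ * X) * (1 - C a₁⁻¹ * X) * (1 - C a₂ * X) * (1 - C a₂⁻¹ * X) *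
        (1 - C a₃ * X) * (1 - C a₃⁻¹ * X) =
      (1 - C (a₁ + a₁⁻¹) * X + X ^ 2) * (1 - C (a₂ + a₂⁻¹) * X + X ^ 2) *
        (1 - C (a₃ + a₃⁻¹) * X + X ^ 2) := by
  simp only [mul_assoc,
    ← one_sub_C_mul_X_mul_one_sub_C_mul_X_of_mul_eq_one (mul_inv_cancel₀ h₁),
    ← one_sub_C_mul_X_mul_one_sub_C_mul_X_of_mul_eq_one (mul_inv_cancel₀ h₂),
    ← one_sub_C_mul_X_mul_one_sub_C_mul_X_of_mul_eq_one (mul_inv_cancel₀ h₃)]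

open Polynomial in
/-- Relation between the sign-adjusted coefficients `r_ℓ` of the degree-3
standard Euler factor and the Weyl symmetrizations `g₀, g₁, g₂, g₃`:
`g₀·r₁ = g₁`, `g₀·r₂ = 3g₀ + g₂`, `g₀·r₃ = 2g₁ + g₃`. -/
theorem stmt12 (K : Type*) [Field K] (a₀ a₁ a₂ a₃ : K)
    (h₁ : a₁ ≠ 0) (h₂ : a₂ ≠ 0) (h₃ : a₃ ≠ 0)
    (r : ℕ → K)
    (hr : ∀ ℓ, r ℓ = (-1 : K) ^ ℓ *
      ((1 - C a₁ * X) * (1 - C a₁⁻¹ * X) * (1 - C a₂ * X) * (1 - C a₂⁻¹ * X) *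
        (1 - C a₃ * X) * (1 - C a₃⁻¹ * X)).coeff ℓ)
    (g₀ g₁ g₂ g₃ : K)
    (hg₀ : g₀ = a₀ ^ 2 * a₁ * a₂ * a₃)
    (hg₁ : g₁ = a₀ ^ 2 * (a₁ * a₂ + a₁ * a₃ + a₂ * a₃)
        + a₀ ^ 2 * a₁ * a₂ * a₃ * (a₁ + a₂ + a₃))
    (hg₂ : g₂ = a₀ ^ 2 * (a₁ + a₂ + a₃)
        + a₀ ^ 2 * (a₁ ^ 2 * a₂ + a₁ ^ 2 * a₃ + a₂ ^ 2 * a₁ + a₂ ^ 2 * a₃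
            + a₃ ^ 2 * a₁ + a₃ ^ 2 * a₂)
        + a₀ ^ 2 * a₁ * a₂ * a₃ * (a₁ * a₂ + a₁ * a₃ + a₂ * a₃))
    (hg₃ : g₃ = a₀ ^ 2 * (1 + a₁ ^ 2) * (1 + a₂ ^ 2) * (1 + a₃ ^ 2)) :
    g₀ * r 1 = g₁ ∧ g₀ * r 2 = 3 * g₀ + g₂ ∧ g₀ * r 3 = 2 * g₁ + g₃ := by
  set s₁ := a₁ + a₁⁻¹
  set s₂ := a₂ + a₂⁻¹
  set s₃ := a₃ + a₃⁻¹
  obtain ⟨c₁, c₂, c₃⟩ := coeff_palindromic_quadratic_prod_three s₁ s₂ s₃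
  rw [← euler_factor_three_eq_prod_palindromic h₁ h₂ h₃] at c₁ c₂ c₃
  have hr₁ : r 1 = s₁ + s₂ + s₃ := by rw [hr, c₁]; ring
  have hr₂ : r 2 = 3 + (s₁ * s₂ + s₁ * s₃ + s₂ * s₃) := by rw [hr, c₂]; ring
  have hr₃ : r 3 = s₁ * s₂ * s₃ + 2 * (s₁ + s₂ + s₃) := by rw [hr, c₃]; ring
  have k₁ : a₁ * s₁ = 1 + a₁ ^ 2 := mul_add_inv_self_eq h₁
  have k₂ : a₂ * s₂ = 1 + a₂ ^ 2 := mul_add_inv_self_eq h₂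
  have k₃ : a₃ * s₃ = 1 + a₃ ^ 2 := mul_add_inv_self_eq h₃
  clear_value s₁ s₂ s₃
  subst hg₀ hg₁ hg₂ hg₃
  rw [hr₁, hr₂, hr₃]
  have hg₀r₁ : a₀ ^ 2 * a₁ * a₂ * a₃ * (s₁ + s₂ + s₃) = a₀ ^ 2 * (a₁ * a₂ + a₁ * a₃ + a₂ * a₃)
      + a₀ ^ 2 * a₁ * a₂ * a₃ * (a₁ + a₂ + a₃) := by
    linear_combination a₀ ^ 2 * (a₂ * a₃ * k₁ + a₁ * a₃ * k₂ + a₁ * a₂ * k₃)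
  refine ⟨hg₀r₁, ?_, ?_⟩
  · linear_combination a₀ ^ 2 * (a₃ * (a₂ * s₂ * k₁ + (1 + a₁ ^ 2) * k₂)
      + a₂ * (a₃ * s₃ * k₁ + (1 + a₁ ^ 2) * k₃) + a₁ * (a₃ * s₃ * k₂ + (1 + a₂ ^ 2) * k₃))
  · linear_combination a₀ ^ 2 * (a₂ * s₂ * a₃ * s₃ * k₁ + (1 + a₁ ^ 2) * a₃ * s₃ * k₂
      + (1 + a₁ ^ 2) * (1 + a₂ ^ 2) * k₃) + 2 * hg₀r₁
end

section
/- Let O be a discrete valuation ring with maximal ideal 𝔪, uniformizer π, and fraction field K. Let d ≥ 2, let ι be an index type, let c₁, …, c_d ∈ K, and let v₁, …, v_d : ι → O. Assume: (i) for all i, j ∈ ι, the sum Σ_{ℓ=1}^d c_ℓ · v_ℓ(i) · v_ℓ(j) lies in the image of O in K; (ii) π·c₁ and π·c₂ are units of O (i.e., c₁ and c₂ have valuation −1); (iii) c_ℓ lies in the image of O in K for all ℓ ≥ 3; (iv) there exists an index s ∈ ι with v₁(s) ∉ 𝔪 and v₂(s) ∉ 𝔪. Then for every i ∈ ι, v₂(s)·v₁(i)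 − v₁(s)·v₂(i) ∈ 𝔪; that is, v₁/v₁(s) and v₂/v₂(s) are congruent modulo 𝔪. -/
/-! Multiplying by `π` clears the denominators of `c₁, c₂` and sends every other term of
`Σ_ℓ c_ℓ v_ℓ(i) v_ℓ(j)` into `𝔪`, so modulo `𝔪` the units `u_ℓ = π c_ℓ` satisfy
`u₁ v₁(i) v₁(j) + u₂ v₂(i) v₂(j) ≡ 0` for all `i, j`. Eliminating `u₂` between the instances
`(i, s)` and `(s, s)` leaves `u₁ v₁(s) (v₂(s) v₁(i) - v₁(s) v₂(i)) ≡ 0`, and the first two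
factors are units. -/

open IsLocalRing

theorem dvd_sum_mul_of_algebraMap_eq_mul {O K ι : Type*} [CommRing O] [CommRing K]
    [Algebra O K] [Fintype ι] (hinj : Function.Injective (algebraMap O K)) {π : O}
    {c : ι → K} {e w : ι → O} (he : ∀ ℓ, algebraMap O K (e ℓ) = algebraMap O K π * c ℓ)
    (hsum : ∑ ℓ, c ℓ * algebraMap O K (w ℓ) ∈ (algebraMap O K).range) :
    π ∣ ∑ ℓ, e ℓ * w ℓ := by
  obtain ⟨m, hm⟩ := hsum
  refine ⟨m, hinj ?_⟩
  simp only [map_sum, map_mul, he, hm, Finset.mul_sum, mul_assoc]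

theorem Ideal.add_mem_of_sum_mem {R ι : Type*} [CommRing R] [Fintype ι] [DecidableEq ι]
    (I : Ideal R) {f : ι → R} {a b : ι} (hab : a ≠ b) (hsum : ∑ ℓ, f ℓ ∈ I)
    (hf : ∀ ℓ, ℓ ≠ a → ℓ ≠ b → f ℓ ∈ I) : f a + f b ∈ I := by
  rw [← Finset.sum_sdiff (Finset.subset_univ {a, b}), Finset.sum_pair hab] at hsum
  refine (I.add_mem_iff_right (I.sum_mem fun ℓ hℓ => hf ℓ ?_ ?_)).mp hsum <;>
    simp_all [Finset.mem_sdiff]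

theorem Ideal.IsPrime.mul_sub_mul_mem_of_forall_add_mem {R ι : Type*} [CommRing R]
    {P : Ideal R} (hP : P.IsPrime) {a b : R} {x y : ι → R}
    (h : ∀ i j, a * (x i * x j) + b * (y i * y j) ∈ P) (ha : a ∉ P) {s : ι} (hs : x s ∉ P)
    (i : ι) : y s * x i - x s * y i ∈ P := by
  have hprod : a * x s * (y s * x i - x s * y i) ∈ P := by
    convert P.sub_mem (P.mul_mem_left (y s) (h i s)) (P.mul_mem_left (y i) (h s s)) using 1
    ring
  exact (hP.mem_or_mem hprod).resolve_left (hP.mul_notMem ha hs)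

/-- Congruence-neighbor criterion: if in `M_{ij} = Σ_ℓ c_ℓ v_ℓ(i) v_ℓ(j)` all
the values `M_{ij}` are integral, `c₁, c₂` have valuation `−1` (i.e. `π c₁`
and `π c₂` are units of `O`), the remaining `c_ℓ` are integral, and
`v₁(s), v₂(s)` are units mod `𝔪` for some index `s`, then `v₁/v₁(s)` and
`v₂/v₂(s)` are congruent modulo the maximal ideal `𝔪`. -/
theorem stmt13 (O : Type*) [CommRing O] [IsDomain O] [IsDiscreteValuationRing O]
    (K : Type*) [Field K] [Algebra O K] [IsFractionRing O K]
    (π : O) (hπ : Irreducible π)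
    (d : ℕ) (hd : 2 ≤ d) (ι : Type*)
    (c : Fin d → K) (v : Fin d → ι → O)
    (h1 : ∀ i j : ι,
      (∑ ℓ, c ℓ * algebraMap O K (v ℓ i) * algebraMap O K (v ℓ j)) ∈
        (algebraMap O K).range)
    (h2 : ∃ u : Oˣ, algebraMap O K π * c ⟨0, by omega⟩ = algebraMap O K u)
    (h2' : ∃ u : Oˣ, algebraMap O K π * c ⟨1, by omega⟩ = algebraMap O K u)
    (h3 : ∀ ℓ : Fin d, 2 ≤ (ℓ : ℕ) → c ℓ ∈ (algebraMap O K).range)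
    (s : ι)
    (hs1 : v ⟨0, by omega⟩ s ∉ IsLocalRing.maximalIdeal O) :
    ∀ i : ι,
      v ⟨1, by omega⟩ s * v ⟨0, by omega⟩ i - v ⟨0, by omega⟩ s * v ⟨1, by omega⟩ i ∈
        IsLocalRing.maximalIdeal O := by
  obtain ⟨u₀, hu₀⟩ := h2
  obtain ⟨u₁, hu₁⟩ := h2'
  have hinj := IsFractionRing.injective O K
  have hπm : π ∈ maximalIdeal O := (mem_maximalIdeal π).mpr hπ.not_isUnit
  have hlift : ∀ ℓ : Fin d, ∃ e : O, algebraMap O K e = algebraMap O K π * c ℓ ∧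
      (2 ≤ (ℓ : ℕ) → e ∈ maximalIdeal O) := by
    rintro ⟨_ | _ | n, hn⟩
    · exact ⟨u₀, hu₀.symm, by simp⟩
    · exact ⟨u₁, hu₁.symm, by simp⟩
    · obtain ⟨a, ha⟩ := h3 ⟨n + 2, hn⟩ (by simp)
      exact ⟨π * a, by rw [map_mul, ha], fun _ => Ideal.mul_mem_right a _ hπm⟩
  choose e he he𝔪 using hlift
  have hform : ∀ j j', (u₀ : O) * (v ⟨0, by omega⟩ j * v ⟨0, by omega⟩ j') +
      (u₁ : O) * (v ⟨1, by omega⟩ j * v ⟨1, by omega⟩ j') ∈ maximalIdeal O := by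
    intro j j'
    have hsum : ∑ ℓ, c ℓ * algebraMap O K (v ℓ j * v ℓ j') ∈ (algebraMap O K).range := by
      simpa only [map_mul, mul_assoc] using h1 j j'
    have := (maximalIdeal O).add_mem_of_sum_mem (f := fun ℓ => e ℓ * (v ℓ j * v ℓ j'))
      (a := ⟨0, by omega⟩) (b := ⟨1, by omega⟩) (by simp)
      (Ideal.mem_of_dvd _ (dvd_sum_mul_of_algebraMap_eq_mul hinj he hsum) hπm)
      fun ℓ hℓ0 hℓ1 => Ideal.mul_mem_right _ _ <| he𝔪 ℓ <| by
        simp only [ne_eq, Fin.ext_iff] at hℓ0 hℓ1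
        omega
    rwa [hinj ((he _).trans hu₀), hinj ((he _).trans hu₁)] at this
  exact (maximalIdeal.isMaximal O).isPrime.mul_sub_mul_mem_of_forall_add_mem hform
    (notMem_maximalIdeal.mpr u₀.isUnit) hs1
end
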